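/- Let φ(x̄) be a formula of SCL^k (the k-variable fragment of SCL, i.e. using at most k distinct variables) with vocabulary τ. Then there exist a finite relational vocabulary τ' ⊇ τ and a first-order formula Ψ(x̄) of FO^k over τ' such that: (1) if 𝔄 is a τ-model such that Eloise has no winning strategy in G_∞(𝔄,s,φ), then 𝔄 can be expanded to a τ'-model 𝔄' with 𝔄',s ⊨ Ψ(x̄); and (2) if 𝔄' is a τ'-model with 𝔄',s ⊨ Ψ(x̄), then Eloise has no winning strategy in G_∞(𝔄'↾τ, s, φ). Consequently, every formula of SCL^k is equivalent to a formula of universal second-order logic whose first-order part uses at most k variables. -/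

import Mathlib

/-
Common formalization of the logics SCL (static computation logic, unbounded
game-theoretic semantics) and BndSCL (bounded semantics), following the paper
"First-order logic with self-reference".

* Games are played on arbitrary (possibly infinite) arenas; plays are maximal
  walks; strategies are functions from finite walks (histories) to positions;
  infinite plays, and finite plays ending at a dead end where `win` holds for
  neither player, are won by nobody.
* The semantic games are formalized with positions carrying the current
  (sub)formula, an environment binding each label symbol to the labelled
  formula it most recently named (this is the standard closure rendering of
  "reference formula of a claim-symbol occurrence"), the current assignment
  and the polarity (+ = true, − = false).  The bounded game additionally
  carries a clock value.
-/

set_option autoImplicit false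

universe u

/-! ## Generic two-player games on (possibly infinite) arenas -/

inductive Player : Type
  | eloise : Player
  | abelard : Player
deriving DecidableEq

def Player.opp : Player → Player
  | .eloise => .abelard
  | .abelard => .eloise

/-- A game arena: an ownership function (corresponding to the partition
`V = V₀ ∪ V₁`), an edge relation, and a predicate telling which player (if
any) wins a play ending at a given dead-end position. -/
structure GameArena (P : Type u) where
  turn : P → Player
  edge : P → P → Prop
  win : P → Player → Prop

namespace GameArena

variable {P : Type u} (A : GameArena P)

def DeadEnd (u : P) : Prop := ∀ x, ¬ A.edge u x

/-- `w` is a finite nonempty walk whose first element is `v`. -/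
def IsWalkFrom (v : P) (w : List P) : Prop :=
  w.head? = some v ∧ List.Chain' A.edge w

/-- A finite (maximal) play from `v`: a walk whose last element is a dead end. -/
def IsFinitePlay (v : P) (w : List P) : Prop :=
  A.IsWalkFrom v w ∧ ∀ u, w.getLast? = some u → A.DeadEnd u

/-- An infinite play from `v`. -/
def IsInfPlay (v : P) (f : ℕ → P) : Prop :=
  f 0 = v ∧ ∀ n, A.edge (f n) (f (n + 1))

/-- A strategy (a function from histories to positions) of player `pl` is
legal if it always prescribes a move along an edge whenever a move exists. -/
def LegalFor (pl : Player) (v : P) (σ : List P → P) : Prop :=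
  ∀ w u, A.IsWalkFrom v w → w.getLast? = some u → A.turn u = pl →
    (∃ x, A.edge u x) → A.edge u (σ w)

/-- The strategy `σ` of player `pl` is followed in the finite play `w`. -/
def FollowsFin (pl : Player) (σ : List P → P) (w : List P) : Prop :=
  ∀ q u x, (q ++ [x]) <+: w → q.getLast? = some u → A.turn u = pl → x = σ q

/-- The strategy `σ` of player `pl` is followed in the infinite play `f`. -/
def FollowsInf (pl : Player) (σ : List P → P) (f : ℕ → P) : Prop :=
  ∀ n, A.turn (f n) = pl →
    f (n + 1) = σ (List.ofFn fun i : Fin (n + 1) => f i)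

/-- `σ` is a winning strategy of player `pl` from `v`: it is legal, every
finite maximal play following it ends in a dead end won by `pl`, and no
infinite play follows it (infinite plays are won by neither player). -/
def WinningStrategy (pl : Player) (v : P) (σ : List P → P) : Prop :=
  A.LegalFor pl v σ ∧
  (∀ w, A.IsFinitePlay v w → A.FollowsFin pl σ w →
      ∃ u, w.getLast? = some u ∧ A.win u pl) ∧
  (∀ f, A.IsInfPlay v f → ¬ A.FollowsInf pl σ f)

def HasWinningStrategy (pl : Player) (v : P) : Prop :=
  ∃ σ : List P → P, A.WinningStrategy pl v σ

end GameArena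

/-- A positional strategy: its moves depend only on the current position. -/
def Positional {P : Type u} (σ : List P → P) : Prop :=
  ∀ q q' : List P, q.getLast? = q'.getLast? → σ q = σ q'

/-! ## Syntax of SCL / BndSCL -/

/-- A purely relational vocabulary. -/
structure Vocab : Type 1 where
  Rel : Type
  arity : Rel → ℕ

/-- Formulas of SCL / BndSCL over the vocabulary `V`.  Variables and label
symbols are natural numbers; `claim L` is the claim symbol `C_L` and
`lab L φ` is the labelled formula `L φ`. -/
inductive SCLFormula (V : Vocab) : Type
  | bot : SCLFormula V
  | eq (x y : ℕ) : SCLFormula V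
  | rel (R : V.Rel) (args : Fin (V.arity R) → ℕ) : SCLFormula V
  | claim (L : ℕ) : SCLFormula V
  | not (φ : SCLFormula V) : SCLFormula V
  | and (φ ψ : SCLFormula V) : SCLFormula V
  | or (φ ψ : SCLFormula V) : SCLFormula V
  | ex (x : ℕ) (φ : SCLFormula V) : SCLFormula V
  | all (x : ℕ) (φ : SCLFormula V) : SCLFormula V
  | lab (L : ℕ) (φ : SCLFormula V) : SCLFormula V

namespace SCLFormula

variable {V : Vocab}

/-- First-order atoms. -/
def IsFOAtom : SCLFormula V → Prop
  | .bot => True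
  | .eq _ _ => True
  | .rel _ _ => True
  | _ => False

/-- Purely first-order formulas (no claim symbols, no label symbols). -/
def IsFO : SCLFormula V → Prop
  | .bot => True
  | .eq _ _ => True
  | .rel _ _ => True
  | .claim _ => False
  | .not φ => IsFO φ
  | .and φ ψ => IsFO φ ∧ IsFO ψ
  | .or φ ψ => IsFO φ ∧ IsFO ψ
  | .ex _ φ => IsFO φ
  | .all _ φ => IsFO φ
  | .lab _ _ => False

/-- Free (individual) variables. -/
def freeVars : SCLFormula V → Finset ℕ
  | .bot => ∅
  | .eq x y => {x, y}
  | .rel _ a => Finset.image a Finset.univ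
  | .claim _ => ∅
  | .not φ => freeVars φ
  | .and φ ψ => freeVars φ ∪ freeVars ψ
  | .or φ ψ => freeVars φ ∪ freeVars ψ
  | .ex x φ => freeVars φ \ {x}
  | .all x φ => freeVars φ \ {x}
  | .lab _ φ => freeVars φ

/-- All variables occurring in a formula (free or bound). -/
def vars : SCLFormula V → Finset ℕ
  | .bot => ∅
  | .eq x y => {x, y}
  | .rel _ a => Finset.image a Finset.univ
  | .claim _ => ∅
  | .not φ => vars φ
  | .and φ ψ => vars φ ∪ vars ψ
  | .or φ ψ => vars φ ∪ vars ψ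
  | .ex x φ => insert x (vars φ)
  | .all x φ => insert x (vars φ)
  | .lab _ φ => vars φ

/-- Sentences: formulas with no free variables. -/
def IsSentence (φ : SCLFormula V) : Prop := freeVars φ = ∅

end SCLFormula

/-! ## Structures and first-order (Tarski) satisfaction -/

/-- A (suitable) model for vocabulary `V`: a nonempty domain together with an
interpretation of all relation symbols. -/
structure Struct (V : Vocab) where
  Dom : Type u
  dom_nonempty : Nonempty Dom
  interp : ∀ R : V.Rel, (Fin (V.arity R) → Dom) → Prop

attribute [instance] Struct.dom_nonempty

/-- Satisfaction of atoms (false on non-atoms). -/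
def atomSat {V : Vocab} (M : Struct.{u} V) (s : ℕ → M.Dom) : SCLFormula V → Prop
  | .bot => False
  | .eq x y => s x = s y
  | .rel R a => M.interp R fun i => s (a i)
  | _ => False

/-- Standard (Tarski) first-order satisfaction.  It is only meaningful on
purely first-order formulas; claim symbols are interpreted as `False` and
label symbols are ignored. -/
def FOSat {V : Vocab} (M : Struct.{u} V) : (ℕ → M.Dom) → SCLFormula V → Prop
  | _, .bot => False
  | s, .eq x y => s x = s y
  | s, .rel R a => M.interp R fun i => s (a i)
  | _, .claim _ => False
  | s, .not φ => ¬ FOSat M s φ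
  | s, .and φ ψ => FOSat M s φ ∧ FOSat M s ψ
  | s, .or φ ψ => FOSat M s φ ∨ FOSat M s ψ
  | s, .ex x φ => ∃ a : M.Dom, FOSat M (Function.update s x a) φ
  | s, .all x φ => ∀ a : M.Dom, FOSat M (Function.update s x a) φ
  | s, .lab _ φ => FOSat M s φ

/-! ## The evaluation games -/

/-- A position of the semantic game: the current formula, the environment
recording for each label symbol `L` the reference formula `L ψ` it currently
names, the current assignment, and the polarity (`true` = `+`). -/
structure SCLPos (V : Vocab) (D : Type u) : Type u where
  form : SCLFormula V
  env : ℕ → Option (SCLFormula V)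
  asg : ℕ → D
  pol : Bool

/-- Which player moves at a given position. (At positions with at most one
successor the owner is irrelevant; we let Eloise own them.) -/
def posTurn {V : Vocab} {D : Type u} (p : SCLPos V D) : Player :=
  match p.form, p.pol with
  | .and _ _, true => .abelard
  | .and _ _, false => .eloise
  | .or _ _, true => .eloise
  | .or _ _, false => .abelard
  | .all _ _, true => .abelard
  | .all _ _, false => .eloise
  | .ex _ _, true => .eloise
  | .ex _ _, false => .abelard
  | _, _ => .eloise

/-- Who wins a play ending at a given position: at an FO-atom position,
Eloise wins iff the atom's truth value agrees with the polarity, and Abelard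
wins otherwise; plays ending anywhere else (e.g. at a claim symbol with no
reference formula, or with clock value 0) are won by neither player. -/
def posWin {V : Vocab} (M : Struct.{u} V) (p : SCLPos V M.Dom) : Player → Prop
  | .eloise => p.form.IsFOAtom ∧ (atomSat M p.asg p.form ↔ p.pol = true)
  | .abelard => p.form.IsFOAtom ∧ ¬ (atomSat M p.asg p.form ↔ p.pol = true)

/-- Moves of the unbounded evaluation game `G_∞`. -/
inductive UStep {V : Vocab} (M : Struct.{u} V) :
    SCLPos V M.Dom → SCLPos V M.Dom → Prop
  | neg (φ : SCLFormula V) (e : ℕ → Option (SCLFormula V)) (s : ℕ → M.Dom) (b : Bool) :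
      UStep M ⟨.not φ, e, s, b⟩ ⟨φ, e, s, !b⟩
  | andLeft (φ ψ : SCLFormula V) (e : ℕ → Option (SCLFormula V)) (s : ℕ → M.Dom) (b : Bool) :
      UStep M ⟨.and φ ψ, e, s, b⟩ ⟨φ, e, s, b⟩
  | andRight (φ ψ : SCLFormula V) (e : ℕ → Option (SCLFormula V)) (s : ℕ → M.Dom) (b : Bool) :
      UStep M ⟨.and φ ψ, e, s, b⟩ ⟨ψ, e, s, b⟩
  | orLeft (φ ψ : SCLFormula V) (e : ℕ → Option (SCLFormula V)) (s : ℕ → M.Dom) (b : Bool) :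
      UStep M ⟨.or φ ψ, e, s, b⟩ ⟨φ, e, s, b⟩
  | orRight (φ ψ : SCLFormula V) (e : ℕ → Option (SCLFormula V)) (s : ℕ → M.Dom) (b : Bool) :
      UStep M ⟨.or φ ψ, e, s, b⟩ ⟨ψ, e, s, b⟩
  | exStep (x : ℕ) (φ : SCLFormula V) (e : ℕ → Option (SCLFormula V)) (s : ℕ → M.Dom)
      (b : Bool) (a : M.Dom) :
      UStep M ⟨.ex x φ, e, s, b⟩ ⟨φ, e, Function.update s x a, b⟩
  | allStep (x : ℕ) (φ : SCLFormula V) (e : ℕ → Option (SCLFormula V)) (s : ℕ → M.Dom)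
      (b : Bool) (a : M.Dom) :
      UStep M ⟨.all x φ, e, s, b⟩ ⟨φ, e, Function.update s x a, b⟩
  | labStep (L : ℕ) (φ : SCLFormula V) (e : ℕ → Option (SCLFormula V)) (s : ℕ → M.Dom)
      (b : Bool) :
      UStep M ⟨.lab L φ, e, s, b⟩ ⟨φ, Function.update e L (some (.lab L φ)), s, b⟩
  | claimStep (L : ℕ) (e : ℕ → Option (SCLFormula V)) (s : ℕ → M.Dom) (b : Bool)
      (χ : SCLFormula V) (h : e L = some χ) :
      UStep M ⟨.claim L, e, s, b⟩ ⟨χ, e, s, b⟩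

/-- Moves of the `n`-bounded evaluation game: positions additionally carry a
clock value, which decreases by one exactly at jumps from a claim symbol to
its reference formula; a claim-symbol position with clock value `0` is a dead
end won by neither player. -/
inductive BStep {V : Vocab} (M : Struct.{u} V) :
    SCLPos V M.Dom × ℕ → SCLPos V M.Dom × ℕ → Prop
  | neg (φ : SCLFormula V) (e : ℕ → Option (SCLFormula V)) (s : ℕ → M.Dom) (b : Bool) (n : ℕ) :
      BStep M (⟨.not φ, e, s, b⟩, n) (⟨φ, e, s, !b⟩, n)
  | andLeft (φ ψ : SCLFormula V) (e : ℕ → Option (SCLFormula V)) (s : ℕ → M.Dom) (b : Bool)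
      (n : ℕ) : BStep M (⟨.and φ ψ, e, s, b⟩, n) (⟨φ, e, s, b⟩, n)
  | andRight (φ ψ : SCLFormula V) (e : ℕ → Option (SCLFormula V)) (s : ℕ → M.Dom) (b : Bool)
      (n : ℕ) : BStep M (⟨.and φ ψ, e, s, b⟩, n) (⟨ψ, e, s, b⟩, n)
  | orLeft (φ ψ : SCLFormula V) (e : ℕ → Option (SCLFormula V)) (s : ℕ → M.Dom) (b : Bool)
      (n : ℕ) : BStep M (⟨.or φ ψ, e, s, b⟩, n) (⟨φ, e, s, b⟩, n)
  | orRight (φ ψ : SCLFormula V) (e : ℕ → Option (SCLFormula V)) (s : ℕ → M.Dom) (b : Bool)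
      (n : ℕ) : BStep M (⟨.or φ ψ, e, s, b⟩, n) (⟨ψ, e, s, b⟩, n)
  | exStep (x : ℕ) (φ : SCLFormula V) (e : ℕ → Option (SCLFormula V)) (s : ℕ → M.Dom)
      (b : Bool) (n : ℕ) (a : M.Dom) :
      BStep M (⟨.ex x φ, e, s, b⟩, n) (⟨φ, e, Function.update s x a, b⟩, n)
  | allStep (x : ℕ) (φ : SCLFormula V) (e : ℕ → Option (SCLFormula V)) (s : ℕ → M.Dom)
      (b : Bool) (n : ℕ) (a : M.Dom) :
      BStep M (⟨.all x φ, e, s, b⟩, n) (⟨φ, e, Function.update s x a, b⟩, n)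
  | labStep (L : ℕ) (φ : SCLFormula V) (e : ℕ → Option (SCLFormula V)) (s : ℕ → M.Dom)
      (b : Bool) (n : ℕ) :
      BStep M (⟨.lab L φ, e, s, b⟩, n) (⟨φ, Function.update e L (some (.lab L φ)), s, b⟩, n)
  | claimStep (L : ℕ) (e : ℕ → Option (SCLFormula V)) (s : ℕ → M.Dom) (b : Bool)
      (χ : SCLFormula V) (n : ℕ) (h : e L = some χ) :
      BStep M (⟨.claim L, e, s, b⟩, n + 1) (⟨χ, e, s, b⟩, n)

/-- The unbounded evaluation game `G_∞(𝔄, ·, ·)` as a game arena. -/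
def gameU {V : Vocab} (M : Struct.{u} V) : GameArena (SCLPos V M.Dom) where
  turn := posTurn
  edge := UStep M
  win := posWin M

/-- The bounded evaluation games `G_n(𝔄, ·, ·)` (for all clock values `n`
simultaneously) as a game arena. -/
def gameB {V : Vocab} (M : Struct.{u} V) : GameArena (SCLPos V M.Dom × ℕ) where
  turn p := posTurn p.1
  edge := BStep M
  win p := posWin M p.1

/-- The initial position of the evaluation game for `φ` under assignment `s`:
empty environment and positive polarity. -/
def initPos {V : Vocab} {D : Type u} (φ : SCLFormula V) (s : ℕ → D) : SCLPos V D :=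
  ⟨φ, fun _ => none, s, true⟩

/-- Truth under the unbounded semantics (the logic SCL):
`𝔄,s ⊨ φ` iff Eloise has a winning strategy in `G_∞(𝔄,s,φ)`. -/
def SCLTrue {V : Vocab} (M : Struct.{u} V) (s : ℕ → M.Dom) (φ : SCLFormula V) : Prop :=
  (gameU M).HasWinningStrategy .eloise (initPos φ s)

/-! ### The bounded game `G_ω` -/

/-- Positions of the game `G_ω`: the initial position (where Abelard picks a
number `n'`), the intermediate positions (where Eloise picks some `n ≥ n'`),
and the positions of the `n`-bounded games. -/
inductive GOPos (V : Vocab) (D : Type u) : Type u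
  | start : GOPos V D
  | mid (n' : ℕ) : GOPos V D
  | inner (p : SCLPos V D) (clock : ℕ) : GOPos V D

inductive GOStep {V : Vocab} (M : Struct.{u} V) (φ : SCLFormula V) (s : ℕ → M.Dom) :
    GOPos V M.Dom → GOPos V M.Dom → Prop
  | abelardPick (n' : ℕ) : GOStep M φ s .start (.mid n')
  | eloisePick (n' n : ℕ) (h : n' ≤ n) : GOStep M φ s (.mid n') (.inner (initPos φ s) n)
  | play (p q : SCLPos V M.Dom) (m k : ℕ) (h : BStep M (p, m) (q, k)) :
      GOStep M φ s (.inner p m) (.inner q k)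

def goTurn {V : Vocab} {D : Type u} : GOPos V D → Player
  | .start => .abelard
  | .mid _ => .eloise
  | .inner p _ => posTurn p

def goWin {V : Vocab} (M : Struct.{u} V) : GOPos V M.Dom → Player → Prop
  | .inner p _, pl => posWin M p pl
  | _, _ => False

/-- The bounded evaluation game `G_ω(𝔄,s,φ)`: Abelard picks `n' ∈ ℕ`, then
Eloise picks `n ≥ n'`, and then `G_n(𝔄,s,φ)` is played. -/
def gameOmega {V : Vocab} (M : Struct.{u} V) (φ : SCLFormula V) (s : ℕ → M.Dom) :
    GameArena (GOPos V M.Dom) where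
  turn := goTurn
  edge := GOStep M φ s
  win := goWin M

/-- Truth under the bounded semantics (the logic BndSCL):
`𝔄,s ⊨_ω φ` iff Eloise has a winning strategy in `G_ω(𝔄,s,φ)`. -/
def BndTrue {V : Vocab} (M : Struct.{u} V) (s : ℕ → M.Dom) (φ : SCLFormula V) : Prop :=
  (gameOmega M φ s).HasWinningStrategy .eloise .start

/-! ## Approximants -/

/-- Auxiliary structural recursion for approximants: `k` tells what to put in
place of a claim symbol.  Label symbols are deleted (while updating the
environment), and polarity is tracked through negations. -/
def approxCore {V : Vocab}
    (k : (ℕ → Option (SCLFormula V)) → Bool → ℕ → SCLFormula V) :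
    (ℕ → Option (SCLFormula V)) → Bool → SCLFormula V → SCLFormula V
  | _, _, .bot => .bot
  | _, _, .eq x y => .eq x y
  | _, _, .rel R a => .rel R a
  | e, b, .claim L => k e b L
  | e, b, .not φ => .not (approxCore k e (!b) φ)
  | e, b, .and φ ψ => .and (approxCore k e b φ) (approxCore k e b ψ)
  | e, b, .or φ ψ => .or (approxCore k e b φ) (approxCore k e b ψ)
  | e, b, .ex x φ => .ex x (approxCore k e b φ)
  | e, b, .all x φ => .all x (approxCore k e b φ)
  | e, b, .lab L φ => approxCore k (Function.update e L (some (.lab L φ))) b φ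

/-- `approx n e b φ` unfolds each claim symbol of `φ` (in environment `e`,
under polarity `b`) through `n` jumps to reference formulas; claim symbols
reached with exhausted budget (or with no reference formula) are replaced by
`⊥` at positive occurrences and `⊤` (i.e. `¬⊥`) at negative occurrences, and
all label symbols are deleted. -/
def approx {V : Vocab} : ℕ → (ℕ → Option (SCLFormula V)) → Bool → SCLFormula V → SCLFormula V
  | 0 => approxCore fun _ b _ => if b then .bot else .not .bot
  | n + 1 => approxCore fun e b L =>
      match e L with
      | some χ => approx n e b χ
      | none => if b then .bot else .not .bot

/-- The `n`-th approximant `Φⁿ_φ` of `φ`: the first-order formula obtained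
from the `n`-th unfolding of `φ` by deleting all label symbols and replacing
positive claim occurrences by `⊥` and negative ones by `⊤`. -/
def approximant {V : Vocab} (φ : SCLFormula V) (n : ℕ) : SCLFormula V :=
  approx n (fun _ => none) true φ

/-! ## Vocabulary extensions, expansions and reducts -/

/-- The vocabulary `τ'` obtained from `V` by adding new relation symbols from
`N` (with arities `na`). -/
def extVocab (V : Vocab) (N : Type) (na : N → ℕ) : Vocab :=
  ⟨V.Rel ⊕ N, Sum.elim V.arity na⟩

/-- The expansion of a `V`-model `M` to an `extVocab V N na`-model, using `J`
to interpret the new relation symbols. -/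
def expand {V : Vocab} {N : Type} {na : N → ℕ} (M : Struct.{u} V)
    (J : ∀ n : N, (Fin (na n) → M.Dom) → Prop) : Struct.{u} (extVocab V N na) where
  Dom := M.Dom
  dom_nonempty := M.dom_nonempty
  interp := fun R =>
    match R with
    | Sum.inl r => M.interp r
    | Sum.inr n => J n

/-- The reduct `𝔄'↾τ` of an `extVocab V N na`-model to the vocabulary `V`. -/
def reduct {V : Vocab} {N : Type} {na : N → ℕ}
    (M' : Struct.{u} (extVocab V N na)) : Struct.{u} V where
  Dom := M'.Dom
  dom_nonempty := M'.dom_nonempty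
  interp := fun R => M'.interp (Sum.inl R)

/-- `φ` uses only the variables `0, …, k−1` (free or bound), i.e. it belongs
to the `k`-variable fragment. -/
def UsesVarsLt {V : Vocab} (k : ℕ) (φ : SCLFormula V) : Prop :=
  ∀ x ∈ φ.vars, x < k


/-!
Eloise has no winning strategy from a position iff the position lies in a trap for her: a set
of positions where she never wins at a dead end, each of her moves stays in the set, and
Abelard always has a move staying in it. The set of all positions from which she cannot win is
such a trap, because winning strategies from the successors of a position glue to one from the
position itself. Conversely, a play that stays in a trap and follows a supposed winning
strategy of Eloise never ends in a dead end she wins, so it can be continued forever, which a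
winning strategy forbids.

Up to the assignment, the positions of the game for `φ` are finitely many states `c`: a
subformula, an environment binding labels to labelled subformulas, and a polarity. A trap is
therefore described by one `k`-ary relation `W_c` per state, and being a trap is a first-order
condition `Ψ` on the `W_c` that uses only the variables of `φ`. Since `Ψ` quantifies only over
`x₀, …, x_{k-1}`, the assignments outside these variables stay those of the initial position.
-/

lemma List.exists_seq_ofFn_of_extend {α : Type u} {I : List α → Prop} {a : α} (h0 : I [a])
    (hstep : ∀ w, I w → ∃ y, I (w ++ [y])) :
    ∃ g : ℕ → α, ∀ n, I (List.ofFn fun i : Fin (n + 1) => g i) := by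
  choose next hnext using hstep
  let seq : ℕ → {w // I w} := fun n =>
    Nat.rec ⟨[a], h0⟩ (fun _ w => ⟨w.1 ++ [next w.1 w.2], hnext w.1 w.2⟩) n
  refine ⟨fun n => (seq n).1.getLast?.getD a, fun n => ?_⟩
  suffices h : (seq n).1 = List.ofFn fun i : Fin (n + 1) => (seq i).1.getLast?.getD a from
    h ▸ (seq n).2
  induction n with
  | zero => rfl
  | succ n ih =>
    rw [List.ofFn_succ_last]
    simp only [Fin.val_castSucc, Fin.val_last, ← ih]
    simp [seq]

lemma List.ofFn_succ_succ_eq_append {α : Type u} (g : ℕ → α) (n : ℕ) :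
    (List.ofFn fun i : Fin (n + 2) => g i) =
      (List.ofFn fun i : Fin (n + 1) => g i) ++ [g (n + 1)] := by
  rw [List.ofFn_succ_last]
  simp

lemma List.getLast?_ofFn_succ {α : Type u} (g : ℕ → α) (n : ℕ) :
    (List.ofFn fun i : Fin (n + 1) => g i).getLast? = some (g n) := by
  rw [List.ofFn_succ_last]
  simp

namespace GameArena

section Plays

variable {P : Type u} {A : GameArena P}

lemma IsWalkFrom.eq_cons {v : P} {w : List P} (h : A.IsWalkFrom v w) : w = v :: w.tail := by
  obtain ⟨hhead, -⟩ := h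
  cases w with
  | nil => simp at hhead
  | cons a t => simp_all

lemma IsWalkFrom.append {v u y : P} {w : List P} (h : A.IsWalkFrom v w)
    (hlast : w.getLast? = some u) (he : A.edge u y) : A.IsWalkFrom v (w ++ [y]) := by
  refine ⟨?_, List.isChain_append.mpr ⟨h.2, List.isChain_singleton y, ?_⟩⟩
  · rw [h.eq_cons]
    rfl
  · intro a ha b hb
    simp_all

lemma FollowsFin.append {pl : Player} {σ : List P → P} {u y : P} {w : List P}
    (h : A.FollowsFin pl σ w) (hlast : w.getLast? = some u) (hy : A.turn u = pl → y = σ w) :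
    A.FollowsFin pl σ (w ++ [y]) := by
  intro q u' x hpre hq hturn
  rcases List.prefix_concat_iff.mp hpre with heq | hpre
  · obtain ⟨rfl, hxy⟩ := List.append_inj' heq rfl
    obtain rfl : x = y := by simpa using hxy
    obtain rfl : u' = u := by simpa [hlast] using hq.symm
    exact hy hturn
  · exact h q u' x hpre hq hturn

lemma FollowsFin.tail {pl : Player} {σ τ : List P → P} {u x : P} {r : List P}
    (h : A.FollowsFin pl σ (u :: x :: r)) (hστ : ∀ q, σ (u :: x :: q) = τ (x :: q)) :
    A.FollowsFin pl τ (x :: r) := by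
  intro q u' y hpre hq hturn
  obtain ⟨q', rfl⟩ : ∃ q', q = x :: q' := by
    cases q with
    | nil => simp at hq
    | cons a q' => exact ⟨q', by simpa using (List.cons_prefix_cons.mp hpre).1⟩
  rw [← hστ]
  refine h (u :: x :: q') u' y (List.cons_prefix_cons.mpr ⟨rfl, hpre⟩) ?_ hturn
  simpa using hq

lemma FollowsInf.tail {pl : Player} {σ τ : List P → P} {f : ℕ → P}
    (h : A.FollowsInf pl σ f) (hστ : ∀ q, σ (f 0 :: f 1 :: q) = τ (f 1 :: q)) :
    A.FollowsInf pl τ (fun n => f (n + 1)) := by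
  intro n hturn
  simp only at hturn ⊢
  rw [h (n + 1) hturn, List.ofFn_succ, List.ofFn_succ, List.ofFn_succ]
  exact hστ _

end Plays

variable {P : Type u} (A : GameArena P)

lemma hasWinningStrategy_of_deadEnd {pl : Player} {u : P} (hd : A.DeadEnd u)
    (hw : A.win u pl) : A.HasWinningStrategy pl u := by
  have hwalk : ∀ w, A.IsWalkFrom u w → w = [u] := by
    intro w h
    obtain ⟨t, rfl⟩ : ∃ t, w = u :: t := ⟨_, h.eq_cons⟩
    rcases t with _ | ⟨x, r⟩
    · rfl
    · exact absurd (List.isChain_cons_cons.mp h.2).1 (hd x)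
  refine ⟨fun _ => u, fun w u' h hlast _ ⟨x, hx⟩ => ?_, fun w h _ => ?_,
    fun f h _ => hd _ (h.1 ▸ h.2 0)⟩
  · obtain rfl := hwalk w h
    obtain rfl : u = u' := by simpa using hlast
    exact absurd hx (hd x)
  · obtain rfl := hwalk w h.1
    exact ⟨u, rfl, hw⟩

/- Legality is required on every walk, also on those that no play following the strategy
reaches; `someMove` supplies a legal move there. -/
open Classical in
noncomputable def someMove (m u : P) : P :=
  if h : ∃ y, A.edge u y then h.choose else m

lemma edge_someMove {u : P} (m : P) (h : ∃ y, A.edge u y) : A.edge u (A.someMove m u) := by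
  rw [someMove, dif_pos h]
  exact h.choose_spec

open Classical in
noncomputable def prependStrat (pl : Player) (m : P) : List P → P
  | _ :: x :: r =>
    if h : A.HasWinningStrategy pl x then h.choose (x :: r)
    else A.someMove m ((x :: r).getLast (List.cons_ne_nil x r))
  | _ => m

lemma prependStrat_of_hasWinningStrategy {pl : Player} {x : P} (m u : P)
    (h : A.HasWinningStrategy pl x) (r : List P) :
    A.prependStrat pl m (u :: x :: r) = h.choose (x :: r) := by
  rw [prependStrat, dif_pos h]

lemma legalFor_prependStrat {pl : Player} {u m : P} (hm : A.turn u = pl → A.edge u m) :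
    A.LegalFor pl u (A.prependStrat pl m) := by
  intro w u' hwalk hlast hturn hex
  obtain ⟨t, rfl⟩ : ∃ t, w = u :: t := ⟨_, hwalk.eq_cons⟩
  rcases t with _ | ⟨x, r⟩
  · obtain rfl : u = u' := by simpa using hlast
    exact hm hturn
  have hlast' : (x :: r).getLast? = some u' := by simpa using hlast
  by_cases hx : A.HasWinningStrategy pl x
  · rw [A.prependStrat_of_hasWinningStrategy m u hx]
    exact hx.choose_spec.1 (x :: r) u' ⟨rfl, (List.isChain_cons_cons.mp hwalk.2).2⟩
      hlast' hturn hex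
  · rw [prependStrat, dif_neg hx]
    rw [List.getLast?_eq_some_getLast (List.cons_ne_nil x r), Option.some.injEq] at hlast'
    subst hlast'
    exact A.edge_someMove m hex

/- Covers both owners of `u`: if `pl` moves at `u`, only the chosen successor `m` has to be
winning. -/
lemma hasWinningStrategy_of_forall_edge {pl : Player} {u m : P} (hne : ¬ A.DeadEnd u)
    (hm : A.turn u = pl → A.edge u m)
    (hwin : ∀ x, A.edge u x → (A.turn u = pl → x = m) → A.HasWinningStrategy pl x) :
    A.HasWinningStrategy pl u := by
  refine ⟨A.prependStrat pl m, A.legalFor_prependStrat hm, ?_, ?_⟩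
  · rintro w ⟨hwalk, hdead⟩ hfol
    obtain ⟨t, rfl⟩ : ∃ t, w = u :: t := ⟨_, hwalk.eq_cons⟩
    rcases t with _ | ⟨x, r⟩
    · exact absurd (hdead u rfl) hne
    have hchain := List.isChain_cons_cons.mp hwalk.2
    have hx := hwin x hchain.1 fun ht => hfol [u] u x ⟨r, rfl⟩ rfl ht
    obtain ⟨u', hu', hwin'⟩ := hx.choose_spec.2.1 (x :: r)
      ⟨⟨rfl, hchain.2⟩, fun u' hu' => hdead u' (by simpa using hu')⟩
      (hfol.tail (A.prependStrat_of_hasWinningStrategy m u hx))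
    exact ⟨u', by simpa using hu', hwin'⟩
  · rintro f ⟨hf0, hedge⟩ hfol
    have hx := hwin _ (hf0 ▸ hedge 0) fun ht => hfol 0 (hf0 ▸ ht)
    refine hx.choose_spec.2.2 _ ⟨rfl, fun n => hedge (n + 1)⟩ (hfol.tail fun q => ?_)
    rw [hf0]
    exact A.prependStrat_of_hasWinningStrategy m u hx q

def TrapCond (pl : Player) (S : Set P) (u : P) : Prop :=
  (A.DeadEnd u → ¬ A.win u pl) ∧
  (A.turn u = pl → ∀ x, A.edge u x → x ∈ S) ∧
  (A.turn u ≠ pl → (∃ x, A.edge u x) → ∃ x, A.edge u x ∧ x ∈ S)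

lemma TrapCond.mono {pl : Player} {S T : Set P} {u : P} (h : A.TrapCond pl S u)
    (hST : ∀ x, A.edge u x → x ∈ S → x ∈ T) : A.TrapCond pl T u := by
  obtain ⟨hdead, hown, hother⟩ := h
  refine ⟨hdead, fun ht x hx => hST x hx (hown ht x hx), fun ht hd => ?_⟩
  obtain ⟨x, hx, hxS⟩ := hother ht hd
  exact ⟨x, hx, hST x hx hxS⟩

lemma trapCond_not_hasWinningStrategy {pl : Player} {u : P}
    (h : ¬ A.HasWinningStrategy pl u) :
    A.TrapCond pl {x | ¬ A.HasWinningStrategy pl x} u := by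
  refine ⟨fun hd hwin => h ?_, fun ht x hx hwx => h ?_, fun ht hd => ?_⟩
  · exact A.hasWinningStrategy_of_deadEnd hd hwin
  · exact A.hasWinningStrategy_of_forall_edge (fun hd => hd x hx) (fun _ => hx)
      fun y _ hy => hy ht ▸ hwx
  · by_contra hall
    push Not at hall
    exact h (A.hasWinningStrategy_of_forall_edge (m := u) (fun h' => hd.elim h')
      (fun h => absurd h ht) fun y hy _ => not_not.mp (hall y hy))

lemma not_hasWinningStrategy_of_trapCond {pl : Player} {S : Set P}
    (hS : ∀ u ∈ S, A.TrapCond pl S u) {v : P} (hv : v ∈ S) :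
    ¬ A.HasWinningStrategy pl v := by
  rintro ⟨σ, hlegal, hfin, hinf⟩
  let I : List P → Prop := fun w =>
    A.IsWalkFrom v w ∧ A.FollowsFin pl σ w ∧ ∃ u ∈ S, w.getLast? = some u
  have h0 : I [v] := by
    refine ⟨⟨rfl, List.isChain_singleton v⟩, fun q u x hpre hq => ?_, v, hv, rfl⟩
    obtain rfl : q = [] := by simpa using hpre.length_le
    simp at hq
  have hstep : ∀ w, I w → ∃ y, I (w ++ [y]) := by
    rintro w ⟨hwalk, hfol, u, hu, hlast⟩
    obtain ⟨hdead, hown, hother⟩ := hS u hu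
    have hd : ¬ A.DeadEnd u := by
      intro hd
      obtain ⟨u', hu', hwin⟩ := hfin w ⟨hwalk, fun u' hu' => by simp_all⟩ hfol
      simp_all
    obtain ⟨y, hy, hyS, hyσ⟩ : ∃ y, A.edge u y ∧ y ∈ S ∧ (A.turn u = pl → y = σ w) := by
      by_cases ht : A.turn u = pl
      · have hy := hlegal w u hwalk hlast ht (by simpa [DeadEnd] using hd)
        exact ⟨σ w, hy, hown ht _ hy, fun _ => rfl⟩
      · obtain ⟨y, hy, hyS⟩ := hother ht (by simpa [DeadEnd] using hd)
        exact ⟨y, hy, hyS, fun h => absurd h ht⟩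
    exact ⟨y, hwalk.append hlast hy, hfol.append hlast hyσ, y, hyS, by simp⟩
  obtain ⟨g, hg⟩ := List.exists_seq_ofFn_of_extend h0 hstep
  refine hinf g ⟨?_, fun n => ?_⟩ fun n hturn => ?_
  · simpa using (hg 0).1.1
  · have hchain := (hg (n + 1)).1.2
    rw [List.ofFn_succ_succ_eq_append] at hchain
    exact List.isChain_append.mp hchain |>.2.2 (g n) (List.getLast?_ofFn_succ g n) (g (n + 1)) rfl
  · refine (hg (n + 1)).2.1 _ (g n) (g (n + 1)) ?_ (List.getLast?_ofFn_succ g n) hturn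
    rw [List.ofFn_succ_succ_eq_append]

end GameArena

namespace SCLFormula

variable {V : Vocab}

def subs : SCLFormula V → List (SCLFormula V)
  | .bot => [.bot]
  | .eq x y => [.eq x y]
  | .rel R a => [.rel R a]
  | .claim L => [.claim L]
  | .not ψ => .not ψ :: subs ψ
  | .and ψ χ => .and ψ χ :: (subs ψ ++ subs χ)
  | .or ψ χ => .or ψ χ :: (subs ψ ++ subs χ)
  | .ex x ψ => .ex x ψ :: subs ψ
  | .all x ψ => .all x ψ :: subs ψ
  | .lab L ψ => .lab L ψ :: subs ψ

lemma mem_subs_self (φ : SCLFormula V) : φ ∈ φ.subs := by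
  cases φ <;> simp [subs]

lemma mem_subs_trans {χ ψ φ : SCLFormula V} (h₁ : χ ∈ ψ.subs) (h₂ : ψ ∈ φ.subs) :
    χ ∈ φ.subs := by
  induction φ <;> simp only [subs, List.mem_cons, List.mem_append] at h₂ ⊢ <;>
    aesop (add norm simp subs)

lemma vars_subset_of_mem_subs {ψ φ : SCLFormula V} (h : ψ ∈ φ.subs) : ψ.vars ⊆ φ.vars := by
  induction φ <;> simp only [subs, List.mem_cons, List.mem_append] at h <;>
    rcases h with rfl | h <;> aesop (add norm simp [vars, Finset.subset_iff])

def alls (l : List ℕ) (ψ : SCLFormula V) : SCLFormula V := l.foldr .all ψ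

def conj (l : List (SCLFormula V)) : SCLFormula V := l.foldr .and (.not .bot)

lemma isFO_alls (l : List ℕ) {ψ : SCLFormula V} (h : ψ.IsFO) : (alls l ψ).IsFO := by
  induction l with
  | nil => exact h
  | cons x l ih => exact ih

lemma isFO_conj {l : List (SCLFormula V)} (h : ∀ ψ ∈ l, ψ.IsFO) : (conj l).IsFO := by
  induction l with
  | nil => trivial
  | cons ψ l ih => exact ⟨h ψ (by simp), ih fun χ hχ => h χ (by simp [hχ])⟩

end SCLFormula

open SCLFormula

section UsesVarsLt

variable {V : Vocab} {k : ℕ} {ψ χ φ : SCLFormula V} {x : ℕ}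

lemma UsesVarsLt.of_mem_subs (h : UsesVarsLt k φ) (hψ : ψ ∈ φ.subs) : UsesVarsLt k ψ :=
  fun x hx => h x (vars_subset_of_mem_subs hψ hx)

@[simp] lemma usesVarsLt_bot : UsesVarsLt k (.bot : SCLFormula V) := by
  simp [UsesVarsLt, vars]

@[simp] lemma usesVarsLt_not : UsesVarsLt k (.not ψ) ↔ UsesVarsLt k ψ := Iff.rfl

@[simp] lemma usesVarsLt_and : UsesVarsLt k (.and ψ χ) ↔ UsesVarsLt k ψ ∧ UsesVarsLt k χ := by
  simp [UsesVarsLt, vars, or_imp, forall_and]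

@[simp] lemma usesVarsLt_or : UsesVarsLt k (.or ψ χ) ↔ UsesVarsLt k ψ ∧ UsesVarsLt k χ := by
  simp [UsesVarsLt, vars, or_imp, forall_and]

@[simp] lemma usesVarsLt_ex : UsesVarsLt k (.ex x ψ) ↔ x < k ∧ UsesVarsLt k ψ := by
  simp [UsesVarsLt, vars]

@[simp] lemma usesVarsLt_all : UsesVarsLt k (.all x ψ) ↔ x < k ∧ UsesVarsLt k ψ := by
  simp [UsesVarsLt, vars]

lemma UsesVarsLt.alls {l : List ℕ} (hl : ∀ x ∈ l, x < k) (h : UsesVarsLt k ψ) :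
    UsesVarsLt k (alls l ψ) := by
  induction l with
  | nil => exact h
  | cons x l ih => simp_all [SCLFormula.alls]

lemma UsesVarsLt.conj {l : List (SCLFormula V)} (h : ∀ ψ ∈ l, UsesVarsLt k ψ) :
    UsesVarsLt k (conj l) := by
  induction l with
  | nil => simp [SCLFormula.conj]
  | cons ψ l ih => simp_all [SCLFormula.conj]

end UsesVarsLt

section FOSat

variable {V : Vocab} {M : Struct.{u} V} {s : ℕ → M.Dom}

lemma FOSat_alls_iff {l : List ℕ} {ψ : SCLFormula V} :
    FOSat M s (alls l ψ) ↔ ∀ t : ℕ → M.Dom, (∀ x ∉ l, t x = s x) → FOSat M t ψ := by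
  induction l generalizing s with
  | nil =>
    refine ⟨fun h t ht => ?_, fun h => h s fun _ _ => rfl⟩
    rwa [funext fun x => ht x List.not_mem_nil]
  | cons y l ih =>
    simp only [SCLFormula.alls, List.foldr_cons, FOSat] at ih ⊢
    simp only [ih]
    constructor
    · intro h t ht
      refine h (t y) t fun x hx => ?_
      rcases eq_or_ne x y with rfl | hxy
      · simp
      · rw [Function.update_of_ne hxy]
        exact ht x (by simp [hxy, hx])
    · intro h a t ht
      refine h t fun x hx => ?_
      simp only [List.mem_cons, not_or] at hx
      rw [ht x hx.2, Function.update_of_ne hx.1]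

lemma FOSat_conj_iff {l : List (SCLFormula V)} :
    FOSat M s (conj l) ↔ ∀ ψ ∈ l, FOSat M s ψ := by
  induction l with
  | nil => simp [SCLFormula.conj, FOSat]
  | cons ψ l ih => simp [SCLFormula.conj, FOSat, ← ih]

lemma FOSat_rel_inl_iff {N : Type} {na : N → ℕ} {M' : Struct.{u} (extVocab V N na)}
    {t : ℕ → M'.Dom} {R : V.Rel} {a : Fin (V.arity R) → ℕ} :
    FOSat M' t (.rel (.inl R) a) ↔ (reduct M').interp R fun i => t (a i) :=
  Iff.rfl

end FOSat

section States

variable {V : Vocab} (φ : SCLFormula V)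

/-- The environments occurring in plays of the game for `φ`. -/
def GoodEnv (e : ℕ → Option (SCLFormula V)) : Prop :=
  ∀ L χ, e L = some χ → χ ∈ φ.subs ∧ ∃ ψ, χ = .lab L ψ

def IsStatePos {D : Type u} (p : SCLPos V D) : Prop :=
  p.form ∈ φ.subs ∧ GoodEnv φ p.env

/-- The positions of the game for `φ` up to their assignment; they index the relation symbols
`W_c` of `τ'`. -/
structure State where
  form : SCLFormula V
  env : ℕ → Option (SCLFormula V)
  pol : Bool
  form_mem : form ∈ φ.subs
  goodEnv : GoodEnv φ env

variable {φ}

/- A good environment is determined by the set of formulas it binds, since each of them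
carries its own label. -/
lemma GoodEnv.ext {e e' : ℕ → Option (SCLFormula V)} (he : GoodEnv φ e) (he' : GoodEnv φ e')
    (h : ∀ χ ∈ φ.subs, (∃ L, e L = some χ) ↔ ∃ L, e' L = some χ) : e = e' := by
  have bound : ∀ {e e' : ℕ → Option (SCLFormula V)}, GoodEnv φ e → GoodEnv φ e' →
      (∀ χ ∈ φ.subs, (∃ L, e L = some χ) → ∃ L, e' L = some χ) →
      ∀ L χ, e L = some χ → e' L = some χ := by
    intro e e' he he' h L χ hL
    obtain ⟨hχ, ψ, rfl⟩ := he L χ hL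
    obtain ⟨L', hL'⟩ := h _ hχ ⟨L, hL⟩
    obtain ⟨-, ψ', hψ'⟩ := he' L' _ hL'
    cases hψ'
    exact hL'
  funext L
  exact Option.ext fun χ => ⟨bound he he' (fun χ hχ => (h χ hχ).1) L χ,
    bound he' he (fun χ hχ => (h χ hχ).2) L χ⟩

instance : Finite (State φ) := by
  have : Finite {ψ // ψ ∈ φ.subs} := (List.finite_toSet φ.subs).to_subtype
  refine Finite.of_injective (β := {ψ // ψ ∈ φ.subs} × ({ψ // ψ ∈ φ.subs} → Prop) × Bool)
    (fun c => (⟨c.form, c.form_mem⟩, fun χ => ∃ L, c.env L = some χ.1, c.pol)) ?_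
  rintro ⟨ψ, e, b, hψ, he⟩ ⟨ψ', e', b', hψ', he'⟩ h
  simp only [Prod.mk.injEq, Subtype.mk.injEq] at h
  obtain ⟨rfl, he_eq, rfl⟩ := h
  obtain rfl := he.ext he' fun χ hχ => by simpa using congrFun he_eq ⟨χ, hχ⟩
  rfl

def State.toPos {D : Type u} (c : State φ) (t : ℕ → D) : SCLPos V D :=
  ⟨c.form, c.env, t, c.pol⟩

def State.ofPos {D : Type u} (p : SCLPos V D) (h : IsStatePos φ p) : State φ :=
  ⟨p.form, p.env, p.pol, h.1, h.2⟩

end States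

section Moves

variable {V : Vocab}

def moves {D : Type u} : SCLPos V D → Set (SCLPos V D)
  | ⟨.not ψ, e, s, b⟩ => {⟨ψ, e, s, !b⟩}
  | ⟨.and ψ χ, e, s, b⟩ => {⟨ψ, e, s, b⟩, ⟨χ, e, s, b⟩}
  | ⟨.or ψ χ, e, s, b⟩ => {⟨ψ, e, s, b⟩, ⟨χ, e, s, b⟩}
  | ⟨.ex x ψ, e, s, b⟩ => Set.range fun a => ⟨ψ, e, Function.update s x a, b⟩
  | ⟨.all x ψ, e, s, b⟩ => Set.range fun a => ⟨ψ, e, Function.update s x a, b⟩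
  | ⟨.lab L ψ, e, s, b⟩ => {⟨ψ, Function.update e L (some (.lab L ψ)), s, b⟩}
  | ⟨.claim L, e, s, b⟩ => {q | ∃ χ, e L = some χ ∧ q = ⟨χ, e, s, b⟩}
  | _ => ∅

variable {M : Struct.{u} V}

lemma uStep_iff {p q : SCLPos V M.Dom} : UStep M p q ↔ q ∈ moves p := by
  constructor
  · rintro ⟨⟩ <;> simp_all [moves]
  · obtain ⟨ψ, e, s, b⟩ := p
    cases ψ <;> simp only [moves, Set.mem_empty_iff_false, Set.mem_singleton_iff,
      Set.mem_insert_iff, Set.mem_range, Set.mem_ofPred_eq, false_imp_iff]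
    all_goals first
      | exact False.elim
      | rintro (rfl | rfl) <;> constructor
      | rintro ⟨a, rfl⟩; constructor
      | rintro ⟨χ, h, rfl⟩; exact .claimStep _ _ _ _ _ h

lemma UStep.isStatePos {φ : SCLFormula V} {p q : SCLPos V M.Dom} (h : UStep M p q)
    (hp : IsStatePos φ p) : IsStatePos φ q := by
  obtain ⟨hform, henv⟩ := hp
  have hchild : ∀ {ψ}, ψ ∈ p.form.subs → ψ ∈ φ.subs := fun hψ => mem_subs_trans hψ hform
  cases h with
  | claimStep L e s b χ hχ => exact ⟨(henv L χ hχ).1, henv⟩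
  | labStep L ψ e s b =>
    refine ⟨hchild (by simp [subs, mem_subs_self]), fun L' χ h => ?_⟩
    rcases eq_or_ne L' L with rfl | hne
    · obtain rfl : SCLFormula.lab L' ψ = χ := by simpa using h
      exact ⟨hform, ψ, rfl⟩
    · exact henv L' χ (by simpa [Function.update_of_ne hne] using h)
  | _ => exact ⟨hchild (by simp [subs, mem_subs_self]), henv⟩

lemma UStep.asg_eq_of_le {k : ℕ} {p q : SCLPos V M.Dom} (h : UStep M p q)
    (hp : UsesVarsLt k p.form) {s : ℕ → M.Dom} (hs : ∀ x, k ≤ x → p.asg x = s x) :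
    ∀ x, k ≤ x → q.asg x = s x := by
  intro x hx
  rw [← hs x hx]
  cases h with
  | exStep y ψ e s b a =>
    exact Function.update_of_ne (by have := hp y (by simp [vars]); omega) ..
  | allStep y ψ e s b a =>
    exact Function.update_of_ne (by have := hp y (by simp [vars]); omega) ..
  | _ => rfl

end Moves

section TrapFormulas

variable {V : Vocab} (k : ℕ) (φ : SCLFormula V)

/-- `τ'`: one `k`-ary relation symbol `W_c` for every state `c`. -/
abbrev trapVocab : Vocab := extVocab V (State φ) fun _ => k

open Classical in
/-- `W_c(x₀, …, x_{k-1})` for `c = ⟨ψ, e, b⟩`, and `⊥` if `⟨ψ, e, b⟩` is not a state. -/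
noncomputable def trapFormula (ψ : SCLFormula V) (e : ℕ → Option (SCLFormula V)) (b : Bool) :
    SCLFormula (trapVocab k φ) :=
  if h : ψ ∈ φ.subs ∧ GoodEnv φ e then .rel (.inr ⟨ψ, e, b, h.1, h.2⟩) fun i => i.val else .bot

noncomputable def trapStep (ψ : SCLFormula V) (e : ℕ → Option (SCLFormula V)) (b : Bool) :
    SCLFormula (trapVocab k φ) :=
  match ψ with
  | .bot => if b then .not .bot else .bot
  | .eq x y => if b then .not (.eq x y) else .eq x y
  | .rel R a => if b then .not (.rel (.inl R) a) else .rel (.inl R) a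
  | .claim L =>
    match e L with
    | none => .not .bot
    | some χ => trapFormula k φ χ e b
  | .not ψ => trapFormula k φ ψ e (!b)
  | .and ψ χ => if b then .or (trapFormula k φ ψ e b) (trapFormula k φ χ e b)
      else .and (trapFormula k φ ψ e b) (trapFormula k φ χ e b)
  | .or ψ χ => if b then .and (trapFormula k φ ψ e b) (trapFormula k φ χ e b)
      else .or (trapFormula k φ ψ e b) (trapFormula k φ χ e b)
  | .ex x ψ => if b then .all x (trapFormula k φ ψ e b) else .ex x (trapFormula k φ ψ e b)
  | .all x ψ => if b then .ex x (trapFormula k φ ψ e b) else .all x (trapFormula k φ ψ e b)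
  | .lab L ψ => trapFormula k φ ψ (Function.update e L (some (.lab L ψ))) b

noncomputable def trapAxiom (c : State φ) : SCLFormula (trapVocab k φ) :=
  alls (List.range k)
    (.or (.not (trapFormula k φ c.form c.env c.pol)) (trapStep k φ c.form c.env c.pol))

/-- The formula `Ψ`. -/
noncomputable def trapAxioms : SCLFormula (trapVocab k φ) :=
  letI := Fintype.ofFinite (State φ)
  .and (trapFormula k φ φ (fun _ => none) true) (conj (Finset.univ.toList.map (trapAxiom k φ)))

lemma isFO_trapFormula (ψ : SCLFormula V) (e : ℕ → Option (SCLFormula V)) (b : Bool) :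
    (trapFormula k φ ψ e b).IsFO := by
  unfold trapFormula
  split_ifs <;> trivial

lemma isFO_trapStep (ψ : SCLFormula V) (e : ℕ → Option (SCLFormula V)) (b : Bool) :
    (trapStep k φ ψ e b).IsFO := by
  cases ψ <;> cases b <;> simp only [trapStep] <;> try split
  all_goals simp [IsFO, isFO_trapFormula]

lemma isFO_trapAxioms : (trapAxioms k φ).IsFO := by
  refine ⟨isFO_trapFormula .., isFO_conj fun ψ hψ => ?_⟩
  obtain ⟨c, -, rfl⟩ := List.mem_map.mp hψ
  exact isFO_alls _ ⟨isFO_trapFormula .., isFO_trapStep ..⟩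

variable {k φ}

lemma usesVarsLt_trapFormula (ψ : SCLFormula V) (e : ℕ → Option (SCLFormula V)) (b : Bool) :
    UsesVarsLt k (trapFormula k φ ψ e b) := by
  unfold trapFormula
  split_ifs
  · intro x hx
    obtain ⟨i, -, rfl⟩ := Finset.mem_image.mp hx
    exact i.isLt
  · exact usesVarsLt_bot

lemma usesVarsLt_trapStep {ψ : SCLFormula V} (hψ : UsesVarsLt k ψ)
    (e : ℕ → Option (SCLFormula V)) (b : Bool) : UsesVarsLt k (trapStep k φ ψ e b) := by
  cases ψ <;> cases b <;> simp only [trapStep] <;> try split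
  all_goals first
    | exact hψ
    | simp_all [usesVarsLt_trapFormula]

lemma usesVarsLt_trapAxioms (hφ : UsesVarsLt k φ) : UsesVarsLt k (trapAxioms k φ) := by
  refine usesVarsLt_and.mpr ⟨usesVarsLt_trapFormula _ _ _, UsesVarsLt.conj fun ψ hψ => ?_⟩
  obtain ⟨c, -, rfl⟩ := List.mem_map.mp hψ
  exact UsesVarsLt.alls (fun x hx => List.mem_range.mp hx) (usesVarsLt_or.mpr
    ⟨usesVarsLt_trapFormula _ _ _, usesVarsLt_trapStep (hφ.of_mem_subs c.form_mem) _ _⟩)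

def trapSet (M' : Struct.{u} (trapVocab k φ)) : Set (SCLPos V (reduct M').Dom) :=
  {p | ∃ h : IsStatePos φ p, M'.interp (.inr (State.ofPos p h)) fun i => p.asg i}

variable {M' : Struct.{u} (trapVocab k φ)}

lemma FOSat_trapFormula_iff {t : ℕ → M'.Dom} {ψ : SCLFormula V}
    {e : ℕ → Option (SCLFormula V)} {b : Bool} :
    FOSat M' t (trapFormula k φ ψ e b) ↔ ⟨ψ, e, t, b⟩ ∈ trapSet M' := by
  unfold trapFormula
  split_ifs with h
  · exact ⟨fun hW => ⟨h, hW⟩, fun ⟨_, hW⟩ => hW⟩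
  · exact ⟨False.elim, fun ⟨h', _⟩ => h h'⟩

lemma FOSat_trapStep_iff {t : ℕ → M'.Dom} {ψ : SCLFormula V}
    {e : ℕ → Option (SCLFormula V)} {b : Bool} :
    FOSat M' t (trapStep k φ ψ e b) ↔
      (gameU (reduct M')).TrapCond .eloise (trapSet M') ⟨ψ, e, t, b⟩ := by
  cases ψ <;> cases b
  case claim.false L | claim.true L =>
    cases hL : e L <;> simp [trapStep, hL, GameArena.TrapCond, GameArena.DeadEnd, gameU,
      uStep_iff, moves, FOSat, FOSat_trapFormula_iff, posTurn, posWin, IsFOAtom]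
  all_goals simp [trapStep, GameArena.TrapCond, GameArena.DeadEnd, gameU, uStep_iff, moves,
    FOSat, FOSat_trapFormula_iff, posTurn, posWin, atomSat, IsFOAtom, ↓FOSat_rel_inl_iff, reduct]

lemma FOSat_trapAxioms_iff {s : ℕ → M'.Dom} :
    FOSat M' s (trapAxioms k φ) ↔ initPos φ s ∈ trapSet M' ∧
      ∀ p ∈ trapSet M', (∀ x, k ≤ x → p.asg x = s x) →
        (gameU (reduct M')).TrapCond .eloise (trapSet M') p := by
  simp only [trapAxioms, trapAxiom, FOSat, FOSat_conj_iff, List.mem_map, Finset.mem_toList,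
    Finset.mem_univ, true_and, forall_exists_index, forall_apply_eq_imp_iff, FOSat_alls_iff,
    FOSat_trapFormula_iff, FOSat_trapStep_iff, List.mem_range, not_lt]
  refine and_congr Iff.rfl ⟨fun h p hp hs => ?_, fun h c t ht => ?_⟩
  · exact (h (State.ofPos p hp.fst) p.asg hs).resolve_left (not_not.mpr hp)
  · by_cases hW : (⟨c.form, c.env, t, c.pol⟩ : SCLPos V M'.Dom) ∈ trapSet M'
    · exact Or.inr (h _ hW ht)
    · exact Or.inl hW

end TrapFormulas

section Directions

variable {V : Vocab} {k : ℕ} {φ : SCLFormula V}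

lemma not_hasWinningStrategy_of_FOSat_trapAxioms (hφ : UsesVarsLt k φ)
    {M' : Struct.{u} (trapVocab k φ)} {s : ℕ → M'.Dom} (h : FOSat M' s (trapAxioms k φ)) :
    ¬ (gameU (reduct M')).HasWinningStrategy .eloise (initPos φ s) := by
  obtain ⟨hinit, htrap⟩ := FOSat_trapAxioms_iff.mp h
  refine (gameU (reduct M')).not_hasWinningStrategy_of_trapCond
    (S := {p | p ∈ trapSet M' ∧ ∀ x, k ≤ x → p.asg x = s x}) (fun p ⟨hp, hs⟩ => ?_)
    ⟨hinit, fun _ _ => rfl⟩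
  exact (htrap p hp hs).mono _ fun q hpq hq =>
    ⟨hq, hpq.asg_eq_of_le (hφ.of_mem_subs hp.fst.1) hs⟩

def canonInterp (M : Struct.{u} V) (s : ℕ → M.Dom) (c : State φ) (t : Fin k → M.Dom) : Prop :=
  ¬ (gameU M).HasWinningStrategy .eloise (c.toPos fun x => if h : x < k then t ⟨x, h⟩ else s x)

lemma mem_trapSet_expand_canonInterp_iff {M : Struct.{u} V} {s : ℕ → M.Dom}
    {p : SCLPos V M.Dom} (hp : IsStatePos φ p) (hs : ∀ x, k ≤ x → p.asg x = s x) :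
    p ∈ trapSet (expand M (canonInterp (k := k) (φ := φ) M s)) ↔
      ¬ (gameU M).HasWinningStrategy .eloise p := by
  have hasg : (fun x => if h : x < k then p.asg x else s x) = p.asg := by
    funext x
    split_ifs with hx
    · rfl
    · exact (hs x (not_lt.mp hx)).symm
  have hW : ∀ h : IsStatePos φ p, canonInterp M s (State.ofPos p h) (fun i : Fin k => p.asg i) ↔
      ¬ (gameU M).HasWinningStrategy .eloise p := by
    intro h
    rw [canonInterp, hasg]
    rfl
  exact ⟨fun ⟨h, hp⟩ => (hW h).mp hp, fun hp' => ⟨hp, (hW hp).mpr hp'⟩⟩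

lemma FOSat_trapAxioms_expand_canonInterp (hφ : UsesVarsLt k φ) {M : Struct.{u} V}
    {s : ℕ → M.Dom} (h : ¬ (gameU M).HasWinningStrategy .eloise (initPos φ s)) :
    FOSat (expand M (canonInterp M s)) s (trapAxioms k φ) := by
  have hinit : IsStatePos φ (initPos φ s) := ⟨mem_subs_self φ, fun _ _ h => by cases h⟩
  refine FOSat_trapAxioms_iff.mpr
    ⟨(mem_trapSet_expand_canonInterp_iff hinit fun _ _ => rfl).mpr h, fun p hp hs => ?_⟩
  have hp' : IsStatePos φ p := hp.fst
  refine ((gameU M).trapCond_not_hasWinningStrategy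
    ((mem_trapSet_expand_canonInterp_iff hp' hs).mp hp)).mono _ fun q hpq hq => ?_
  exact (mem_trapSet_expand_canonInterp_iff (hpq.isStatePos hp')
    (hpq.asg_eq_of_le (hφ.of_mem_subs hp'.1) hs)).mpr hq

end Directions

/-- For every formula `φ` of `SCL^k` over `τ = V` there are
a finite relational extension `τ' ⊇ τ` and a first-order formula `Ψ` of
`FO^k` over `τ'` such that: (1) every `τ`-model in which Eloise has no
winning strategy in `G_∞(𝔄,s,φ)` expands to a `τ'`-model of `Ψ`; (2) in the
`τ`-reduct of any `τ'`-model of `Ψ`, Eloise has no winning strategy in the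
unbounded game for `φ`.  Consequently `φ` is equivalent to the universal
second-order formula `∀R̄ ¬Ψ` whose first-order part uses at most `k`
variables. -/
theorem scl_k_into_universal_so {V : Vocab} (k : ℕ) (φ : SCLFormula V)
    (hφ : UsesVarsLt k φ) :
    ∃ (N : Type) (_ : Finite N) (na : N → ℕ)
      (Ψ : SCLFormula (extVocab V N na)),
      Ψ.IsFO ∧ UsesVarsLt k Ψ ∧
      (∀ (M : Struct.{u} V) (s : ℕ → M.Dom),
        ¬ (gameU M).HasWinningStrategy .eloise (initPos φ s) →
          ∃ J : ∀ n : N, (Fin (na n) → M.Dom) → Prop,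
            FOSat (expand M J) s Ψ) ∧
      (∀ (M' : Struct.{u} (extVocab V N na)) (s : ℕ → M'.Dom),
        FOSat M' s Ψ →
          ¬ (gameU (reduct M')).HasWinningStrategy .eloise (initPos φ s)) ∧
      (∀ (M : Struct.{u} V) (s : ℕ → M.Dom),
        SCLTrue M s φ ↔
          ∀ J : ∀ n : N, (Fin (na n) → M.Dom) → Prop,
            FOSat (expand M J) s (SCLFormula.not Ψ)) := by
  refine ⟨State φ, inferInstance, fun _ => k, trapAxioms k φ, isFO_trapAxioms k φ,
    usesVarsLt_trapAxioms hφ, fun M s h => ⟨_, FOSat_trapAxioms_expand_canonInterp hφ h⟩,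
    fun M' s h => not_hasWinningStrategy_of_FOSat_trapAxioms hφ h, fun M s => ⟨?_, ?_⟩⟩
  · exact fun hwin J hJ => not_hasWinningStrategy_of_FOSat_trapAxioms hφ hJ hwin
  · intro hJ
    by_contra hwin
    exact hJ _ (FOSat_trapAxioms_expand_canonInterp hφ hwin)
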